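/- arXiv:2602.22797 — 3 statements merged into one kernel-verified Lean document; each statement's English description precedes it below -/
import Mathlib

section
/- For every real number δ with 0 < δ < 1 and every integer p ≥ 3, the set Z_p(δ) = {τ ∈ ℝ : H_p(τ,δ) = 0} is nonempty and bounded above and has a largest element h_p(δ), and this largest element satisfies g_{p/2}(δ) < h_p(δ) < g_{p−1}(δ), i.e. 2√δ·cos(2π/p) < h_p(δ) < 2√δ·cos(π/(p−1)). -/
/-!
Context: given real τ, δ with δ > 0, let λ₁ = (τ + √(τ²−4δ))/2 and
λ₂ = (τ − √(τ²−4δ))/2 (complex principal square root).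
H_p(τ,δ) = Σ_{j=1}^{p−1} Σ_{k=1}^{j} λ₁^{k−j} λ₂^{1−k}.
g_q(δ) = 2√δ cos(π/q).
-/

/-- λ₁ = (τ + √(τ²−4δ))/2, using the complex principal square root. -/
noncomputable def lam1 (τ δ : ℝ) : ℂ :=
  ((τ : ℂ) + ((τ : ℂ) ^ 2 - 4 * (δ : ℂ)) ^ ((1 : ℂ) / 2)) / 2

/-- λ₂ = (τ − √(τ²−4δ))/2, using the complex principal square root. -/
noncomputable def lam2 (τ δ : ℝ) : ℂ :=
  ((τ : ℂ) - ((τ : ℂ) ^ 2 - 4 * (δ : ℂ)) ^ ((1 : ℂ) / 2)) / 2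

/-- H_p(τ,δ) = Σ_{j=1}^{p−1} Σ_{k=1}^{j} λ₁^{k−j} λ₂^{1−k}
(indices shifted: j = j'+1, k = k'+1). -/
noncomputable def Hp (p : ℕ) (τ δ : ℝ) : ℂ :=
  ∑ j ∈ Finset.range (p - 1), ∑ k ∈ Finset.range (j + 1),
    lam1 τ δ ^ ((k : ℤ) - (j : ℤ)) * lam2 τ δ ^ (-(k : ℤ))

/-!
Because `λ₁ + λ₂ = τ` and `λ₁ λ₂ = δ`, the inner sums of `H_p` are the Lucas sequence
`U_n(τ, δ)`, so `H_p(·, δ)` is a real polynomial and in particular continuous. Substituting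
`τ = 2√δ cos θ` gives `U_{n+1} sin θ = δ^{n/2} sin ((n+1) θ)`. For `τ ≥ g_{p-1}(δ)` every term of
`H_p` is nonnegative and the first one is `1`, so `H_p > 0`. At `τ = g_{p/2}(δ)`, i.e. `θ = 2π/p`,
the sines of the terms `j` and `p - 2 - j` are opposite, while their weights `δ^{-j/2}` increase
with `j` because `δ < 1`; pairing them shows `H_p < 0`. The zero set is closed, so by the
intermediate value theorem it has a greatest element, lying strictly between the two points.
-/

open Real Finset

/-- The Lucas sequence `U_n(P, Q)`; for `P = τ`, `Q = δ` it is the sequence `S_n` of the paper. -/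
def lucasU {R : Type*} [CommRing R] (P Q : R) : ℕ → R
  | 0 => 0
  | 1 => 1
  | n + 2 => P * lucasU P Q (n + 1) - Q * lucasU P Q n

section LucasU

variable {R : Type*} [CommRing R]

theorem lucasU_add_two (P Q : R) (n : ℕ) :
    lucasU P Q (n + 2) = P * lucasU P Q (n + 1) - Q * lucasU P Q n := rfl

theorem map_lucasU {S : Type*} [CommRing S] (f : R →+* S) (P Q : R) (n : ℕ) :
    f (lucasU P Q n) = lucasU (f P) (f Q) n := by
  induction n using Nat.twoStepInduction with
  | zero => simp [lucasU]
  | one => simp [lucasU]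
  | more n ih₀ ih₁ => simp [lucasU, ih₀, ih₁]

theorem geom_sum₂_eq_lucasU (a b : R) (n : ℕ) :
    ∑ i ∈ range n, a ^ i * b ^ (n - 1 - i) = lucasU (a + b) (a * b) n := by
  induction n using Nat.twoStepInduction with
  | zero => simp [lucasU]
  | one => simp [lucasU]
  | more n ih₀ ih₁ =>
    simp only [Nat.add_sub_cancel] at ih₁
    have hsucc : lucasU (a + b) (a * b) (n + 1) = a ^ n + b * lucasU (a + b) (a * b) n := by
      rw [← ih₀, ← ih₁, geom_sum₂_succ_eq]
    rw [show n + 2 - 1 = n + 1 from rfl, geom_sum₂_succ_eq, Nat.add_sub_cancel, ih₁,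
      lucasU_add_two]
    linear_combination -a * hsucc

end LucasU

theorem continuous_lucasU (Q : ℝ) (n : ℕ) : Continuous fun P : ℝ => lucasU P Q n := by
  induction n using Nat.twoStepInduction with
  | zero => exact continuous_const
  | one => exact continuous_const
  | more n ih₀ ih₁ => exact (continuous_id.mul ih₁).sub (continuous_const.mul ih₀)

theorem lucasU_nonneg_of_two_mul_le {r τ : ℝ} (hr : 0 ≤ r) (hτ : 2 * r ≤ τ) (n : ℕ) :
    0 ≤ lucasU τ (r ^ 2) n := by
  suffices h : ∀ n, 0 ≤ lucasU τ (r ^ 2) n ∧ r * lucasU τ (r ^ 2) n ≤ lucasU τ (r ^ 2) (n + 1) from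
    (h n).1
  intro n
  induction n with
  | zero => simp [lucasU]
  | succ n ih =>
    obtain ⟨h₀, h₁⟩ := ih
    have h₁' : 0 ≤ lucasU τ (r ^ 2) (n + 1) := le_trans (mul_nonneg hr h₀) h₁
    refine ⟨h₁', ?_⟩
    rw [lucasU_add_two]
    nlinarith [mul_le_mul_of_nonneg_left h₁ hr, mul_le_mul_of_nonneg_right hτ h₁']

theorem lucasU_two_mul_cos_mul_sin (r θ : ℝ) (n : ℕ) :
    lucasU (2 * r * cos θ) (r ^ 2) (n + 1) * sin θ = r ^ n * sin ((n + 1) * θ) := by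
  induction n using Nat.twoStepInduction with
  | zero => simp [lucasU]
  | one =>
    rw [show ((1 : ℕ) : ℝ) + 1 = 2 by norm_num, sin_two_mul, lucasU_add_two]
    simp [lucasU]
    ring
  | more n ih₀ ih₁ =>
    have hsin : sin ((n + 3) * θ) = 2 * cos θ * sin ((n + 2) * θ) - sin ((n + 1) * θ) := by
      rw [show (n + 3) * θ = (n + 2) * θ + θ by ring, show (n + 1) * θ = (n + 2) * θ - θ by ring,
        sin_add, sin_sub]
      ring
    push_cast at ih₁ ⊢
    rw [lucasU_add_two, show (n : ℝ) + 2 + 1 = n + 3 by ring, hsin]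
    rw [show (n : ℝ) + 1 + 1 = n + 2 by ring] at ih₁
    linear_combination 2 * r * cos θ * ih₁ - r ^ 2 * ih₀

theorem lam1_add_lam2 (τ δ : ℝ) : lam1 τ δ + lam2 τ δ = τ := by
  unfold lam1 lam2
  ring

theorem lam1_mul_lam2 (τ δ : ℝ) : lam1 τ δ * lam2 τ δ = δ := by
  have hsq := Complex.cpow_ofNat_inv_pow ((τ : ℂ) ^ 2 - 4 * δ) 2
  unfold lam1 lam2
  rw [one_div]
  linear_combination (-1 / 4 : ℂ) * hsq

theorem zpow_sub_mul_zpow_neg {K : Type*} [Field K] {a b : K} (ha : a ≠ 0) (hb : b ≠ 0)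
    {j k : ℕ} (hkj : k ≤ j) :
    a ^ ((k : ℤ) - j) * b ^ (-(k : ℤ)) = ((a * b) ^ j)⁻¹ * (a ^ k * b ^ (j - k)) := by
  rw [zpow_sub₀ ha, zpow_neg, zpow_natCast, zpow_natCast, zpow_natCast, pow_sub₀ b hb hkj, mul_pow]
  field_simp

noncomputable def realHp (p : ℕ) (τ δ : ℝ) : ℝ :=
  ∑ j ∈ range (p - 1), (δ ^ j)⁻¹ * lucasU τ δ (j + 1)

theorem Hp_eq_realHp (p : ℕ) (τ : ℝ) {δ : ℝ} (hδ : δ ≠ 0) : Hp p τ δ = realHp p τ δ := by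
  have hmul := lam1_mul_lam2 τ δ
  have hδ' : lam1 τ δ * lam2 τ δ ≠ 0 := by rw [hmul]; exact_mod_cast hδ
  have hinner (j : ℕ) : ∑ k ∈ range (j + 1), lam1 τ δ ^ ((k : ℤ) - j) * lam2 τ δ ^ (-(k : ℤ)) =
      ((δ : ℂ) ^ j)⁻¹ * lucasU (τ : ℂ) δ (j + 1) := by
    rw [← hmul, ← lam1_add_lam2 τ δ, ← geom_sum₂_eq_lucasU, Nat.add_sub_cancel, mul_sum]
    refine sum_congr rfl fun k hk => ?_
    exact zpow_sub_mul_zpow_neg (left_ne_zero_of_mul hδ') (right_ne_zero_of_mul hδ')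
      (Nat.lt_succ_iff.1 (mem_range.1 hk))
  simp only [Hp, realHp, hinner, ← Complex.ofRealHom_eq_coe, map_sum, map_mul, map_inv₀, map_pow,
    map_lucasU]

theorem continuous_realHp (p : ℕ) (δ : ℝ) : Continuous fun τ => realHp p τ δ :=
  continuous_finsetSum _ fun j _ => continuous_const.mul (continuous_lucasU δ (j + 1))

theorem realHp_two_mul_cos_mul_sin (p : ℕ) {r : ℝ} (hr : r ≠ 0) (θ : ℝ) :
    realHp p (2 * r * cos θ) (r ^ 2) * sin θ =
      ∑ j ∈ range (p - 1), r⁻¹ ^ j * sin ((j + 1) * θ) := by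
  rw [realHp, sum_mul]
  refine sum_congr rfl fun j _ => ?_
  rw [mul_assoc, lucasU_two_mul_cos_mul_sin, inv_pow]
  field_simp
  ring

theorem lucasU_nonneg_of_cos_pi_div_le {r τ : ℝ} (hr : 0 < r) {m n : ℕ} (hm : 2 ≤ m)
    (hτ : 2 * r * cos (π / m) ≤ τ) (hn : n ≤ m) : 0 ≤ lucasU τ (r ^ 2) n := by
  rcases le_or_gt (2 * r) τ with hτr | hτr
  · exact lucasU_nonneg_of_two_mul_le hr.le hτr n
  obtain _ | k := n
  · exact le_rfl
  have hπm : π / m ≤ π / 2 :=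
    div_le_div_of_nonneg_left pi_pos.le two_pos (by exact_mod_cast hm)
  set x := τ / (2 * r)
  have hx1 : x < 1 := (div_lt_one (by positivity)).2 hτr
  have hxcos : cos (π / m) ≤ x := (le_div_iff₀ (by positivity)).2 (by linarith)
  set θ := arccos x
  have hτθ : τ = 2 * r * cos θ := by
    rw [cos_arccos ((neg_one_le_cos _).trans hxcos) hx1.le, mul_div_cancel₀ _ (by positivity)]
  have hθ0 : 0 < θ := arccos_pos.2 hx1
  have hθm : θ ≤ π / m := by
    have hcos := arccos_cos (x := π / m) (by positivity) (by linarith [pi_pos])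
    exact hcos ▸ arccos_le_arccos hxcos
  have hsin : 0 < sin θ := sin_pos_of_pos_of_lt_pi hθ0 (by linarith [pi_pos])
  refine nonneg_of_mul_nonneg_left ?_ hsin
  rw [hτθ, lucasU_two_mul_cos_mul_sin]
  refine mul_nonneg (pow_nonneg hr.le _) (sin_nonneg_of_nonneg_of_le_pi (by positivity) ?_)
  have hkm : (k : ℝ) + 1 ≤ m := by exact_mod_cast hn
  calc (k + 1) * θ ≤ m * (π / m) := mul_le_mul hkm hθm hθ0.le (by positivity)
    _ = π := by field_simp

theorem realHp_pos {p : ℕ} (hp : 3 ≤ p) {δ τ : ℝ} (hδ : 0 < δ)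
    (hτ : 2 * √δ * cos (π / ((p : ℝ) - 1)) ≤ τ) : 0 < realHp p τ δ := by
  have hcast : ((p - 1 : ℕ) : ℝ) = (p : ℝ) - 1 := by
    rw [Nat.cast_sub (by omega), Nat.cast_one]
  refine sum_pos' (fun j hj => mul_nonneg (by positivity) ?_) ⟨0, mem_range.2 (by omega), ?_⟩
  · rw [← sq_sqrt hδ.le]
    exact lucasU_nonneg_of_cos_pi_div_le (sqrt_pos.2 hδ) (m := p - 1) (by omega)
      (by rwa [hcast]) (by have := mem_range.1 hj; omega)
  · simp [lucasU]

theorem pow_sub_pow_mul_sin_two_pi_div_nonpos {q : ℝ} (hq : 1 ≤ q) {p j : ℕ} (hj : j + 2 ≤ p) :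
    (q ^ j - q ^ (p - 2 - j)) * sin ((j + 1) * (2 * π / p)) ≤ 0 := by
  have hp : (0 : ℝ) < p := Nat.cast_pos.2 (by omega)
  have hθ : 0 < 2 * π / p := by positivity
  have hθp : p * (2 * π / p) = 2 * π := mul_div_cancel₀ _ hp.ne'
  have hjθ : 0 < (j + 1) * (2 * π / p) := by positivity
  have hjp : (j : ℝ) + 1 ≤ p := by exact_mod_cast (by omega : j + 1 ≤ p)
  rcases le_or_gt (2 * (j + 1)) p with hjp₂ | hjp₂
  · have hjp₂' : 2 * ((j : ℝ) + 1) ≤ p := by exact_mod_cast hjp₂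
    refine mul_nonpos_of_nonpos_of_nonneg (sub_nonpos.2 (pow_le_pow_right₀ hq (by omega)))
      (sin_nonneg_of_nonneg_of_le_pi hjθ.le ?_)
    nlinarith [mul_le_mul_of_nonneg_right hjp₂' hθ.le]
  · have hjp₂' : (p : ℝ) < 2 * (j + 1) := by exact_mod_cast hjp₂
    refine mul_nonpos_of_nonneg_of_nonpos (sub_nonneg.2 (pow_le_pow_right₀ hq (by omega))) ?_
    rw [← sin_sub_two_pi]
    apply sin_nonpos_of_nonpos_of_neg_pi_le
    · nlinarith [mul_le_mul_of_nonneg_right hjp hθ.le]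
    · nlinarith [mul_lt_mul_of_pos_right hjp₂' hθ]

theorem sum_pow_mul_sin_two_pi_div_neg {q : ℝ} (hq : 1 < q) {p : ℕ} (hp : 3 ≤ p) :
    ∑ j ∈ range (p - 1), q ^ j * sin ((j + 1) * (2 * π / p)) < 0 := by
  set θ := 2 * π / p
  set s : ℕ → ℝ := fun j => sin ((j + 1) * θ)
  have hp0 : (0 : ℝ) < p := by positivity
  -- the angles `(j + 1) θ` and `(p - 1 - j) θ` add up to `2π`
  have hrefl : ∀ j ∈ range (p - 1), s (p - 1 - 1 - j) = -s j := by
    intro j hj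
    have hjp : ((p - 1 - 1 - j : ℕ) : ℝ) + 1 = p - (j + 1) := by
      rw [Nat.sub_sub, Nat.sub_sub, Nat.cast_sub (by have := mem_range.1 hj; omega)]
      push_cast
      ring
    simp only [s, hjp]
    rw [show (p - (j + 1)) * θ = -((j + 1) * θ - 2 * π) by simp only [θ]; field_simp; ring,
      sin_neg, sin_sub_two_pi]
  have hsum : 2 * ∑ j ∈ range (p - 1), q ^ j * s j =
      ∑ j ∈ range (p - 1), (q ^ j - q ^ (p - 2 - j)) * s j := by
    conv_lhs => rw [two_mul]; enter [2]; rw [← sum_range_reflect]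
    rw [← sum_add_distrib]
    refine sum_congr rfl fun j hj => ?_
    rw [hrefl j hj, show p - 1 - 1 - j = p - 2 - j by omega]
    ring
  have hfirst : (q ^ 0 - q ^ (p - 2 - 0)) * s 0 < 0 := by
    refine mul_neg_of_neg_of_pos (sub_neg.2 (pow_lt_pow_right₀ hq (by omega)))
      (sin_pos_of_pos_of_lt_pi (by positivity) ?_)
    have hp3 : (3 : ℝ) ≤ p := by exact_mod_cast hp
    rw [Nat.cast_zero, zero_add, one_mul, div_lt_iff₀ hp0]
    nlinarith [pi_pos]
  have hneg : ∑ j ∈ range (p - 1), (q ^ j - q ^ (p - 2 - j)) * s j < 0 :=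
    sum_neg' (fun j hj => pow_sub_pow_mul_sin_two_pi_div_nonpos hq.le
      (by have := mem_range.1 hj; omega)) ⟨0, mem_range.2 (by omega), hfirst⟩
  linarith

theorem realHp_neg {p : ℕ} (hp : 3 ≤ p) {δ : ℝ} (hδ0 : 0 < δ) (hδ1 : δ < 1) :
    realHp p (2 * √δ * cos (2 * π / p)) δ < 0 := by
  have hr : 0 < √δ := sqrt_pos.2 hδ0
  have hp0 : (0 : ℝ) < p := by positivity
  have hθπ : 2 * π / p < π := by
    have hp3 : (3 : ℝ) ≤ p := by exact_mod_cast hp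
    rw [div_lt_iff₀ hp0]
    nlinarith [pi_pos]
  have hsum := realHp_two_mul_cos_mul_sin p hr.ne' (2 * π / p)
  rw [sq_sqrt hδ0.le] at hsum
  refine neg_of_mul_neg_left ?_ (sin_pos_of_pos_of_lt_pi (by positivity) hθπ).le
  rw [hsum]
  have hr1 : √δ < 1 := (sqrt_lt' one_pos).2 (by rwa [one_pow])
  exact sum_pow_mul_sin_two_pi_div_neg ((one_lt_inv₀ hr).2 hr1) hp

theorem exists_isGreatest_zero_of_neg_of_forall_pos {f : ℝ → ℝ} (hf : Continuous f) {a b : ℝ}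
    (ha : f a < 0) (hb : ∀ x, b ≤ x → 0 < f x) :
    ∃ h, IsGreatest {x | f x = 0} h ∧ a < h ∧ h < b := by
  have hab : a < b := lt_of_not_ge fun h => (hb a h).not_gt ha
  have hlt : ∀ x ∈ {x | f x = 0}, x < b := fun x hx => lt_of_not_ge fun h => (hb x h).ne' hx
  obtain ⟨c, hc, hfc⟩ := intermediate_value_Icc hab.le hf.continuousOn ⟨ha.le, (hb b le_rfl).le⟩
  have hbdd : BddAbove {x | f x = 0} := ⟨b, fun x hx => (hlt x hx).le⟩
  have hmem := (isClosed_eq hf continuous_const).csSup_mem ⟨c, hfc⟩ hbdd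
  refine ⟨_, ⟨hmem, fun x hx => le_csSup hbdd hx⟩, ?_, hlt _ hmem⟩
  have hac : a < c := hc.1.lt_of_ne (by rintro rfl; linarith)
  exact hac.trans_le (le_csSup hbdd hfc)

/-- For 0 < δ < 1 and p ≥ 3, the zero set of τ ↦ H_p(τ,δ) is nonempty and
bounded above, it has a largest element h_p(δ), and
2√δ cos(2π/p) < h_p(δ) < 2√δ cos(π/(p−1)). -/
theorem zero_set_of_Hp_has_greatest_element_with_bounds
    (δ : ℝ) (hδ0 : 0 < δ) (hδ1 : δ < 1) (p : ℕ) (hp : 3 ≤ p) :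
    {τ : ℝ | Hp p τ δ = 0}.Nonempty ∧
    BddAbove {τ : ℝ | Hp p τ δ = 0} ∧
    ∃ h : ℝ, IsGreatest {τ : ℝ | Hp p τ δ = 0} h ∧
      2 * Real.sqrt δ * Real.cos (2 * Real.pi / p) < h ∧
      h < 2 * Real.sqrt δ * Real.cos (Real.pi / ((p : ℝ) - 1)) := by
  have hzero : {τ : ℝ | Hp p τ δ = 0} = {τ | realHp p τ δ = 0} := by
    ext τ
    simp [Hp_eq_realHp p τ hδ0.ne']
  obtain ⟨h, hmax, hlow, hhigh⟩ := exists_isGreatest_zero_of_neg_of_forall_pos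
    (continuous_realHp p δ) (realHp_neg hp hδ0 hδ1) fun τ hτ => realHp_pos hp hδ0 hτ
  rw [hzero]
  exact ⟨hmax.nonempty, hmax.bddAbove, h, hmax, hlow, hhigh⟩
end

section
/- For every vector b = (b₁, b₂) ∈ ℝ² and every integer p ≥ 1: Σ_{j=0}^{p−1} A^j b = S_p b + T_p v, where v = ((1−a₂₂)b₁ + a₁₂b₂, a₂₁b₁ + (1−a₁₁)b₂). -/
/-!
For a `2 × 2` matrix `adjugate A = τ • 1 - A`, so `A * adjugate A = δ • 1` is Cayley–Hamilton and
induction on `p` gives `A ^ p = S (p + 1) • 1 - S p • adjugate A`. Summing over `j < p` yields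
`∑ A ^ j = S p • 1 + T p • (1 - adjugate A)`, and `v = (1 - adjugate A) *ᵥ b`.
-/

open Finset Matrix

theorem Finset.sum_Icc_one_sub_one_eq_sum_range {M : Type*} [AddCommMonoid M] {f : ℕ → M}
    (hf : f 0 = 0) (p : ℕ) : ∑ i ∈ Icc 1 (p - 1), f i = ∑ i ∈ range p, f i :=
  sum_subset (fun i hi => by simp only [mem_Icc, mem_range] at hi ⊢; omega) fun i hi hi' => by
    obtain rfl : i = 0 := by simp only [mem_Icc, mem_range, not_and_or] at hi hi'; omega
    exact hf

namespace Matrix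

variable {R : Type*} [CommRing R] {A : Matrix (Fin 2) (Fin 2) R} {S : ℕ → R}

theorem adjugate_fin_two_eq_trace_smul_one_sub (A : Matrix (Fin 2) (Fin 2) R) :
    adjugate A = trace A • 1 - A := by
  ext i j
  fin_cases i <;> fin_cases j <;> simp [adjugate_fin_two, trace_fin_two]

theorem pow_fin_two_eq_of_lucas (hS0 : S 0 = 0) (hS1 : S 1 = 1)
    (hS : ∀ j, S (j + 2) = trace A * S (j + 1) - det A * S j) (p : ℕ) :
    A ^ p = S (p + 1) • 1 - S p • adjugate A := by
  induction p with
  | zero => simp [hS0, hS1]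
  | succ p ih =>
    rw [pow_succ', ih, mul_sub, mul_smul_comm, mul_smul_comm, mul_one, mul_adjugate, hS,
      adjugate_fin_two_eq_trace_smul_one_sub, smul_smul, sub_smul, mul_smul, mul_smul]
    module

theorem sum_range_pow_fin_two_eq_of_lucas (hS0 : S 0 = 0) (hS1 : S 1 = 1)
    (hS : ∀ j, S (j + 2) = trace A * S (j + 1) - det A * S j) (p : ℕ) :
    ∑ j ∈ range p, A ^ j = S p • 1 + (∑ i ∈ range p, S i) • (1 - adjugate A) := by
  have hshift : ∑ j ∈ range p, S (j + 1) = ∑ i ∈ range p, S i + S p := by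
    rw [← sum_range_succ, sum_range_succ', hS0, add_zero]
  simp only [pow_fin_two_eq_of_lucas hS0 hS1 hS, sum_sub_distrib, ← sum_smul, hshift]
  module

end Matrix

theorem sum_matrix_pow_mulVec_general (A : Matrix (Fin 2) (Fin 2) ℝ) (S T : ℕ → ℝ)
    (hS0 : S 0 = 0) (hS1 : S 1 = 1)
    (hSrec : ∀ j : ℕ, 1 ≤ j →
      S (j + 1) = (A 0 0 + A 1 1) * S j - (A 0 0 * A 1 1 - A 0 1 * A 1 0) * S (j - 1))
    (hT : ∀ j : ℕ, T j = ∑ i ∈ Finset.Icc 1 (j - 1), S i)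
    (b : Fin 2 → ℝ) (p : ℕ) :
    ∑ j ∈ Finset.range p, (A ^ j).mulVec b
      = S p • b + T p • ![(1 - A 1 1) * b 0 + A 0 1 * b 1,
                          A 1 0 * b 0 + (1 - A 0 0) * b 1] := by
  have hS : ∀ j, S (j + 2) = trace A * S (j + 1) - det A * S j := fun j => by
    rw [trace_fin_two, det_fin_two]
    exact hSrec (j + 1) (Nat.le_add_left 1 j)
  have hv : ![(1 - A 1 1) * b 0 + A 0 1 * b 1, A 1 0 * b 0 + (1 - A 0 0) * b 1]
      = (1 - adjugate A) *ᵥ b := by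
    ext i
    fin_cases i <;> simp [adjugate_fin_two, mulVec, dotProduct, Fin.sum_univ_two]
  rw [← sum_mulVec, sum_range_pow_fin_two_eq_of_lucas hS0 hS1 hS, hT,
    sum_Icc_one_sub_one_eq_sum_range hS0, hv, add_mulVec, smul_mulVec, smul_mulVec, one_mulVec]

/-- For every b ∈ ℝ² and every p ≥ 1: Σ_{j=0}^{p−1} A^j b = S_p b + T_p v,
where v = ((1−a₂₂)b₁ + a₁₂b₂, a₂₁b₁ + (1−a₁₁)b₂). -/
theorem sum_matrix_pow_mulVec (A : Matrix (Fin 2) (Fin 2) ℝ) (S T : ℕ → ℝ)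
    (hS0 : S 0 = 0) (hS1 : S 1 = 1)
    (hSrec : ∀ j : ℕ, 1 ≤ j →
      S (j + 1) = (A 0 0 + A 1 1) * S j - (A 0 0 * A 1 1 - A 0 1 * A 1 0) * S (j - 1))
    (hT : ∀ j : ℕ, T j = ∑ i ∈ Finset.Icc 1 (j - 1), S i)
    (b : Fin 2 → ℝ) (p : ℕ) (hp : 1 ≤ p) :
    ∑ j ∈ Finset.range p, (A ^ j).mulVec b
      = S p • b + T p • ![(1 - A 1 1) * b 0 + A 0 1 * b 1,
                          A 1 0 * b 0 + (1 - A 0 0) * b 1] :=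
  sum_matrix_pow_mulVec_general A S T hS0 hS1 hSrec hT b p
end

section
/- Suppose τ² ≠ 4δ and δ − τ + 1 ≠ 0, and let λ₁, λ₂ be the two (possibly complex) eigenvalues of A. Let b = (b₁, b₂) ∈ ℝ², β = (1−a₂₂)b₁ + a₁₂b₂, and let (b_{1p}, b_{2p}) = Σ_{j=0}^{p−1} A^j b. Then for every integer p ≥ 1: (1 − S_{p+1} + a₁₁ S_p) b_{1p} + a₁₂ S_p b_{2p} = (1 − λ₁^p)(1 − λ₂^p) β / ((1 − λ₁)(1 − λ₂)) (an identity of complex numbers). -/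
/-!
Since `A ^ 2 = τ A - δ`, one has `A ^ p = S_p A - δ S_{p-1}`, and the left-hand side is the first
entry of `adj (1 - A ^ p) (∑_{j<p} A ^ j) b`. From `(∑_{j<p} A ^ j) (1 - A) = 1 - A ^ p` and
`adj M * M = M * adj M = det M`, one gets
`det (1 - A) • adj (1 - A ^ p) (∑_{j<p} A ^ j) = det (1 - A ^ p) • adj (1 - A)`, and the first
entry of `adj (1 - A) b` is `β`. Finally `det (1 - A ^ n) = (1 - λ₁ ^ n) (1 - λ₂ ^ n)` because
`tr (A ^ n) = λ₁ ^ n + λ₂ ^ n` and `det (A ^ n) = (λ₁ λ₂) ^ n`.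
-/

open Finset

theorem pow_succ_eq_of_sq_eq {R M : Type*} [CommRing R] [Ring M] [Algebra R M] {x : M} {τ δ : R}
    (hx : x ^ 2 = τ • x - δ • 1) {S : ℕ → R} (hS0 : S 0 = 0) (hS1 : S 1 = 1)
    (hS : ∀ n, S (n + 2) = τ * S (n + 1) - δ * S n) :
    ∀ n : ℕ, x ^ (n + 1) = S (n + 1) • x - (δ * S n) • 1
  | 0 => by simp [hS0, hS1]
  | n + 1 => by
    rw [pow_succ, pow_succ_eq_of_sq_eq hx hS0 hS1 hS n, sub_mul, smul_mul_assoc, ← sq, hx, hS,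
      smul_mul_assoc, one_mul]
    simp only [smul_sub, smul_smul]
    module

theorem Complex.add_cpow_half_div_two_mul_sub (τ δ : ℂ) :
    (τ + (τ ^ 2 - 4 * δ) ^ ((1 : ℂ) / 2)) / 2 * ((τ - (τ ^ 2 - 4 * δ) ^ ((1 : ℂ) / 2)) / 2) = δ := by
  have h : ((τ ^ 2 - 4 * δ) ^ ((1 : ℂ) / 2)) ^ 2 = τ ^ 2 - 4 * δ := by
    simp [one_div]
  linear_combination (-1 / 4 : ℂ) * h

namespace Matrix

variable {R : Type*} [CommRing R]

theorem sq_fin_two (M : Matrix (Fin 2) (Fin 2) R) : M ^ 2 = M.trace • M - M.det • 1 := by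
  ext i j
  fin_cases i <;> fin_cases j <;>
    simp [sq, mul_apply, trace_fin_two, det_fin_two] <;> ring

theorem det_one_sub_fin_two (M : Matrix (Fin 2) (Fin 2) R) :
    (1 - M).det = 1 - M.trace + M.det := by
  simp [det_fin_two, trace_fin_two]; ring

theorem trace_pow_fin_two {K : Type*} [CommRing K] [Algebra R K] (M : Matrix (Fin 2) (Fin 2) R)
    {x y : K} (hsum : x + y = algebraMap R K M.trace) (hprod : x * y = algebraMap R K M.det) :
    ∀ n : ℕ, algebraMap R K (M ^ n).trace = x ^ n + y ^ n
  | 0 => by simp [trace_one, map_ofNat]; norm_num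
  | 1 => by simp [hsum]
  | n + 2 => by
    have hrec : M ^ (n + 2) = M.trace • M ^ (n + 1) - M.det • M ^ n := by
      rw [pow_add, sq_fin_two, mul_sub, mul_smul_comm, mul_smul_comm, mul_one, ← pow_succ]
    rw [hrec, trace_sub, trace_smul, trace_smul, map_sub, smul_eq_mul, smul_eq_mul, map_mul,
      map_mul, trace_pow_fin_two M hsum hprod (n + 1), trace_pow_fin_two M hsum hprod n,
      ← hsum, ← hprod]
    ring

theorem det_one_sub_pow_fin_two {K : Type*} [CommRing K] [Algebra R K]
    (M : Matrix (Fin 2) (Fin 2) R) {x y : K} (hsum : x + y = algebraMap R K M.trace)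
    (hprod : x * y = algebraMap R K M.det) (n : ℕ) :
    algebraMap R K (1 - M ^ n).det = (1 - x ^ n) * (1 - y ^ n) := by
  rw [det_one_sub_fin_two, map_add, map_sub, map_one, trace_pow_fin_two M hsum hprod, det_pow,
    map_pow, ← hprod]
  ring

theorem adjugate_one_sub_pow_succ_mulVec_zero (A : Matrix (Fin 2) (Fin 2) R) {S : ℕ → R}
    (hS0 : S 0 = 0) (hS1 : S 1 = 1) (hS : ∀ n, S (n + 2) = A.trace * S (n + 1) - A.det * S n)
    (q : ℕ) (v : Fin 2 → R) :
    ((1 - A ^ (q + 1)).adjugate *ᵥ v) 0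
      = (1 - S (q + 2) + A 0 0 * S (q + 1)) * v 0 + A 0 1 * S (q + 1) * v 1 := by
  rw [pow_succ_eq_of_sq_eq (sq_fin_two A) hS0 hS1 hS q, hS]
  simp [adjugate_fin_two, mulVec, dotProduct, Fin.sum_univ_two, trace_fin_two]
  ring

variable {n : Type*} [Fintype n] [DecidableEq n]

theorem det_one_sub_smul_adjugate_one_sub_pow_mul_geom_sum (M : Matrix n n R) (p : ℕ) :
    (1 - M).det • ((1 - M ^ p).adjugate * ∑ j ∈ range p, M ^ j)
      = (1 - M ^ p).det • (1 - M).adjugate := by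
  have h : (1 - M ^ p).adjugate * (∑ j ∈ range p, M ^ j) * (1 - M) = (1 - M ^ p).det • 1 := by
    rw [mul_assoc, geom_sum_mul_neg, adjugate_mul]
  calc (1 - M).det • ((1 - M ^ p).adjugate * ∑ j ∈ range p, M ^ j)
      = (1 - M ^ p).adjugate * (∑ j ∈ range p, M ^ j) * ((1 - M) * (1 - M).adjugate) := by
        rw [mul_adjugate, mul_smul_comm, mul_one]
    _ = (1 - M ^ p).det • (1 - M).adjugate := by rw [← mul_assoc, h, smul_mul_assoc, one_mul]

end Matrix

open Matrix

theorem detK_eq_general (A : Matrix (Fin 2) (Fin 2) ℝ) (S : ℕ → ℝ)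
    (hS0 : S 0 = 0) (hS1 : S 1 = 1)
    (hSrec : ∀ j : ℕ, 1 ≤ j →
      S (j + 1) = (A 0 0 + A 1 1) * S j - (A 0 0 * A 1 1 - A 0 1 * A 1 0) * S (j - 1))
    (hden : (A 0 0 * A 1 1 - A 0 1 * A 1 0) - (A 0 0 + A 1 1) + 1 ≠ 0)
    (b : Fin 2 → ℝ) (p : ℕ) (hp : 1 ≤ p) :
    let τ : ℝ := A 0 0 + A 1 1
    let δ : ℝ := A 0 0 * A 1 1 - A 0 1 * A 1 0
    let lam1 : ℂ := ((τ : ℂ) + ((τ : ℂ) ^ 2 - 4 * (δ : ℂ)) ^ ((1 : ℂ) / 2)) / 2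
    let lam2 : ℂ := ((τ : ℂ) - ((τ : ℂ) ^ 2 - 4 * (δ : ℂ)) ^ ((1 : ℂ) / 2)) / 2
    let β : ℝ := (1 - A 1 1) * b 0 + A 0 1 * b 1
    let bp : Fin 2 → ℝ := ∑ j ∈ Finset.range p, (A ^ j).mulVec b
    (((1 - S (p + 1) + A 0 0 * S p) * bp 0 + A 0 1 * S p * bp 1 : ℝ) : ℂ)
      = (1 - lam1 ^ p) * (1 - lam2 ^ p) * (β : ℂ) / ((1 - lam1) * (1 - lam2)) := by
  intro τ δ lam1 lam2 β bp
  obtain ⟨q, rfl⟩ : ∃ q, p = q + 1 := ⟨p - 1, by omega⟩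
  have hS : ∀ n, S (n + 2) = A.trace * S (n + 1) - A.det * S n := fun n => by
    rw [trace_fin_two, det_fin_two]
    exact hSrec (n + 1) n.succ_pos
  have hsum : lam1 + lam2 = algebraMap ℝ ℂ A.trace := by
    simp only [lam1, lam2, τ, trace_fin_two, Complex.coe_algebraMap]
    push_cast
    ring
  have hprod : lam1 * lam2 = algebraMap ℝ ℂ A.det := by
    rw [Complex.coe_algebraMap, det_fin_two]
    exact Complex.add_cpow_half_div_two_mul_sub τ δ
  have hdet : (1 - A).det ≠ 0 := by
    rw [det_one_sub_fin_two, trace_fin_two, det_fin_two]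
    contrapose! hden
    linear_combination hden
  have key := congrArg (fun M => (M *ᵥ b) 0)
    (det_one_sub_smul_adjugate_one_sub_pow_mul_geom_sum A (q + 1))
  simp only [smul_mulVec, ← mulVec_mulVec, sum_mulVec, Pi.smul_apply, smul_eq_mul,
    adjugate_one_sub_pow_succ_mulVec_zero A hS0 hS1 hS] at key
  have hβ : ((1 - A).adjugate *ᵥ b) 0 = β := by
    simp [adjugate_fin_two, mulVec, dotProduct, Fin.sum_univ_two, β]
  have hreal : (1 - S (q + 2) + A 0 0 * S (q + 1)) * bp 0 + A 0 1 * S (q + 1) * bp 1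
      = (1 - A ^ (q + 1)).det * β / (1 - A).det := by
    rw [eq_div_iff hdet, mul_comm, ← hβ, key]
  have hdet1 : algebraMap ℝ ℂ (1 - A).det = (1 - lam1) * (1 - lam2) := by
    simpa using det_one_sub_pow_fin_two A hsum hprod 1
  rw [hreal, ← det_one_sub_pow_fin_two A hsum hprod, ← hdet1, Complex.coe_algebraMap]
  norm_cast

/-- Suppose τ² ≠ 4δ and δ − τ + 1 ≠ 0.  With β = (1−a₂₂)b₁ + a₁₂b₂ and
(b_{1p}, b_{2p}) = Σ_{j=0}^{p−1} A^j b, for every p ≥ 1: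
(1 − S_{p+1} + a₁₁ S_p) b_{1p} + a₁₂ S_p b_{2p}
  = (1 − λ₁^p)(1 − λ₂^p) β / ((1 − λ₁)(1 − λ₂)), as complex numbers. -/
theorem detK_eq (A : Matrix (Fin 2) (Fin 2) ℝ) (S : ℕ → ℝ)
    (hS0 : S 0 = 0) (hS1 : S 1 = 1)
    (hSrec : ∀ j : ℕ, 1 ≤ j →
      S (j + 1) = (A 0 0 + A 1 1) * S j - (A 0 0 * A 1 1 - A 0 1 * A 1 0) * S (j - 1))
    (hdisc : (A 0 0 + A 1 1) ^ 2 ≠ 4 * (A 0 0 * A 1 1 - A 0 1 * A 1 0))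
    (hden : (A 0 0 * A 1 1 - A 0 1 * A 1 0) - (A 0 0 + A 1 1) + 1 ≠ 0)
    (b : Fin 2 → ℝ) (p : ℕ) (hp : 1 ≤ p) :
    let τ : ℝ := A 0 0 + A 1 1
    let δ : ℝ := A 0 0 * A 1 1 - A 0 1 * A 1 0
    let lam1 : ℂ := ((τ : ℂ) + ((τ : ℂ) ^ 2 - 4 * (δ : ℂ)) ^ ((1 : ℂ) / 2)) / 2
    let lam2 : ℂ := ((τ : ℂ) - ((τ : ℂ) ^ 2 - 4 * (δ : ℂ)) ^ ((1 : ℂ) / 2)) / 2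
    let β : ℝ := (1 - A 1 1) * b 0 + A 0 1 * b 1
    let bp : Fin 2 → ℝ := ∑ j ∈ Finset.range p, (A ^ j).mulVec b
    (((1 - S (p + 1) + A 0 0 * S p) * bp 0 + A 0 1 * S p * bp 1 : ℝ) : ℂ)
      = (1 - lam1 ^ p) * (1 - lam2 ^ p) * (β : ℂ) / ((1 - lam1) * (1 - lam2)) :=
  detK_eq_general A S hS0 hS1 hSrec hden b p hp
end
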